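/- arXiv:2102.03960 — 2 statements merged into one kernel-verified Lean document; each statement's English description precedes it below -/
import Mathlib

section
/- Let G be a simple graph on n ≥ 1 vertices with Sombor spectral radius ρ_1 and forgotten topological index F. Then √(2F/n) ≤ ρ_1 ≤ √(2(n−1)F/n). Equality holds in the lower bound if and only if G is the empty graph or a perfect matching (n/2)K_2. If G is connected, equality holds in the upper bound if and only if G is the complete graph K_n. -/
open scoped Classical

noncomputable def somborMatrix {V : Type*} [Fintype V] (G : SimpleGraph V) :
    Matrix V V ℝ := fun i j =>
  if G.Adj i j then Real.sqrt ((G.degree i : ℝ) ^ 2 + (G.degree j : ℝ) ^ 2) else 0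

lemma somborMatrix_isHermitian {V : Type*} [Fintype V] (G : SimpleGraph V) :
    (somborMatrix G).IsHermitian := by
  apply Matrix.ext
  intro i j
  simp only [Matrix.conjTranspose_apply, star_trivial, somborMatrix]
  rw [G.adj_comm, add_comm]

/-- The Sombor eigenvalues of `G`. -/
noncomputable def somborEigs {V : Type*} [Fintype V] (G : SimpleGraph V) : V → ℝ :=
  (somborMatrix_isHermitian G).eigenvalues

/-- The Sombor spectral radius (largest Sombor eigenvalue). -/
noncomputable def somborSpecRad {V : Type*} [Fintype V] (G : SimpleGraph V) : ℝ :=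
  ⨆ i, somborEigs G i

/-- The Sombor energy. -/
noncomputable def somborEnergy {V : Type*} [Fintype V] (G : SimpleGraph V) : ℝ :=
  ∑ i, |somborEigs G i|

/-- The Sombor Estrada index. -/
noncomputable def somborEstrada {V : Type*} [Fintype V] (G : SimpleGraph V) : ℝ :=
  ∑ i, Real.exp (somborEigs G i)

/-- The forgotten topological index `F = ∑ d_i ^ 3`. -/
noncomputable def forgottenIndex {V : Type*} [Fintype V] (G : SimpleGraph V) : ℝ :=
  ∑ i, (G.degree i : ℝ) ^ 3

/-!
Let `λ_i` be the Sombor eigenvalues and `ρ = max λ_i`. Since `S` has zero diagonal and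
nonnegative entries, `∑ λ_i = tr S = 0`, `∑ λ_i² = tr S² = ∑_{ij} S_ij² = 2F`, and
`|λ_i| ≤ ρ` (Perron–Frobenius, via the Rayleigh quotient of `|v|` for an eigenvector `v`).
Hence `2F ≤ nρ²`, and Cauchy–Schwarz applied to the other `n - 1` eigenvalues, whose sum is
`-ρ`, gives `ρ² ≤ (n - 1)(2F - ρ²)`.

Equality in the lower bound means `λ_i² = ρ²` for all `i`, i.e. `S² = ρ² I`; as `(S²)_ik > 0`
exactly when `i` and `k` have a common neighbour, this says that `G` is empty or a perfect
matching. Equality in the upper bound is equality in Cauchy–Schwarz: all eigenvalues other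
than `ρ` are equal, so `S²` is a combination of `S` and `I`; then two non-adjacent vertices have no common neighbour,
which for a connected graph forces `G = K_n`. Conversely `K_n` is `(n - 1)`-regular, and the
Rayleigh quotient of the all-ones vector attains the upper bound.
-/

open Finset Matrix

theorem Finset.sum_sq_card_mul_sub_sum {ι : Type*} (s : Finset ι) (f : ι → ℝ) :
    ∑ i ∈ s, (#s * f i - ∑ j ∈ s, f j) ^ 2 =
      #s * (#s * ∑ i ∈ s, f i ^ 2 - (∑ i ∈ s, f i) ^ 2) := by
  simp only [sub_sq, sum_add_distrib, sum_sub_distrib, mul_pow, ← mul_sum, ← sum_mul,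
    sum_const, nsmul_eq_mul]
  ring

theorem SimpleGraph.Preconnected.eq_top_of_adj_trans {V : Type*} {G : SimpleGraph V}
    (hG : G.Preconnected) (h : ∀ {a b c}, G.Adj a b → G.Adj b c → a ≠ c → G.Adj a c) :
    G = ⊤ := by
  have adj_of_walk {a c : V} (p : G.Walk a c) : a = c ∨ G.Adj a c := by
    induction p with
    | nil => exact Or.inl rfl
    | cons hab _ ih =>
      rcases ih with rfl | hbc
      · exact Or.inr hab
      · exact (em _).imp id (h hab hbc)
  ext a c
  exact ⟨G.ne_of_adj, fun hac => (adj_of_walk (hG a c).some).resolve_left hac⟩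

namespace Matrix

variable {ι : Type*} [Fintype ι]

theorem abs_dotProduct_mulVec_le {A : Matrix ι ι ℝ} (hA : ∀ i j, 0 ≤ A i j) (x : ι → ℝ) :
    |x ⬝ᵥ A *ᵥ x| ≤ |x| ⬝ᵥ A *ᵥ |x| := by
  simp only [dotProduct, mulVec, mul_sum]
  refine (abs_sum_le_sum_abs _ _).trans (sum_le_sum fun i _ => ?_)
  refine (abs_sum_le_sum_abs _ _).trans (sum_le_sum fun j _ => ?_)
  simp [abs_mul, abs_of_nonneg (hA i j)]

namespace IsHermitian

variable [DecidableEq ι] {A : Matrix ι ι ℝ} (hA : A.IsHermitian)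
include hA

theorem trace_cfc (f : ℝ → ℝ) : (cfc f A).trace = ∑ i, f (hA.eigenvalues i) := by
  rw [hA.cfc_eq, IsHermitian.cfc, Unitary.conjStarAlgAut_apply, trace_mul_cycle,
    Unitary.coe_star_mul_self, one_mul, trace_diagonal]
  rfl

theorem sum_eigenvalues_sq : ∑ i, hA.eigenvalues i ^ 2 = ∑ i, ∑ j, A i j ^ 2 := by
  have : IsSelfAdjoint A := hA
  rw [← hA.trace_cfc (· ^ 2), cfc_pow_id A 2, sq]
  refine sum_congr rfl fun i _ => sum_congr rfl fun j _ => ?_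
  change A i j * A j i = A i j ^ 2
  rw [sq, ← hA.apply i j, star_trivial]

theorem mul_self_eq_smul_add_smul_one_iff (α β : ℝ) :
    A * A = α • A + β • (1 : Matrix ι ι ℝ) ↔
      ∀ i, hA.eigenvalues i ^ 2 = α * hA.eigenvalues i + β := by
  have : IsSelfAdjoint A := hA
  have hl : A * A = cfc (fun x : ℝ => x ^ 2) A := by rw [cfc_pow_id A 2, sq]
  have hr : α • A + β • (1 : Matrix ι ι ℝ) = cfc (fun x : ℝ => α * x + β) A := by
    rw [cfc_add_const β (fun x : ℝ => α * x) A, cfc_const_mul_id α A,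
      Algebra.algebraMap_eq_smul_one]
  rw [hl, hr, cfc_eq_cfc_iff_eqOn, hA.spectrum_real_eq_range_eigenvalues]
  simp [Set.EqOn]

theorem mul_self_eq_smul_one_iff (c : ℝ) :
    A * A = c • (1 : Matrix ι ι ℝ) ↔ ∀ i, hA.eigenvalues i ^ 2 = c := by
  simpa using hA.mul_self_eq_smul_add_smul_one_iff 0 c

open scoped MatrixOrder in
theorem dotProduct_mulVec_le {ρ : ℝ} (hρ : ∀ i, hA.eigenvalues i ≤ ρ) (x : ι → ℝ) :
    x ⬝ᵥ A *ᵥ x ≤ ρ * (x ⬝ᵥ x) := by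
  have : IsSelfAdjoint A := hA
  have hpsd : (ρ • (1 : Matrix ι ι ℝ) - A).PosSemidef := by
    have hcfc : ρ • (1 : Matrix ι ι ℝ) - A = cfc (fun x => ρ - x) A := by
      rw [cfc_sub (fun _ => ρ) (fun x => x) A, cfc_const ρ A, cfc_id' ℝ A,
        Algebra.algebraMap_eq_smul_one]
    rw [← nonneg_iff_posSemidef, hcfc]
    refine cfc_nonneg fun x hx => ?_
    obtain ⟨i, rfl⟩ := hA.spectrum_real_eq_range_eigenvalues ▸ hx
    exact sub_nonneg.mpr (hρ i)
  have := hpsd.dotProduct_mulVec_nonneg x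
  simp only [star_trivial, sub_mulVec, smul_mulVec, one_mulVec, dotProduct_sub,
    dotProduct_smul, smul_eq_mul] at this
  linarith

theorem abs_eigenvalues_le_of_nonneg (hA₀ : ∀ i j, 0 ≤ A i j) {ρ : ℝ}
    (hρ : ∀ i, hA.eigenvalues i ≤ ρ) (k : ι) : |hA.eigenvalues k| ≤ ρ := by
  set v : ι → ℝ := ⇑(hA.eigenvectorBasis k)
  have hv : v ⬝ᵥ v = 1 := by
    have h : inner ℝ (hA.eigenvectorBasis k) (hA.eigenvectorBasis k) = 1 := by
      rw [real_inner_self_eq_norm_sq, hA.eigenvectorBasis.orthonormal.1 k, one_pow]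
    rwa [EuclideanSpace.inner_eq_star_dotProduct, star_trivial] at h
  have hvv : |v| ⬝ᵥ |v| = v ⬝ᵥ v := by simp [dotProduct, ← sq]
  calc |hA.eigenvalues k| = |v ⬝ᵥ A *ᵥ v| := by
        rw [hA.mulVec_eigenvectorBasis, dotProduct_smul, hv, smul_eq_mul, mul_one]
    _ ≤ |v| ⬝ᵥ A *ᵥ |v| := abs_dotProduct_mulVec_le hA₀ v
    _ ≤ ρ * (|v| ⬝ᵥ |v|) := hA.dotProduct_mulVec_le hρ |v|
    _ = ρ := by rw [hvv, hv, mul_one]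

end IsHermitian

end Matrix

section SomborMatrix

variable {V : Type*} [Fintype V] (G : SimpleGraph V)

theorem forgottenIndex_nonneg : 0 ≤ forgottenIndex G :=
  sum_nonneg fun _ _ => by positivity

theorem somborMatrix_nonneg (i j : V) : 0 ≤ somborMatrix G i j := by
  unfold somborMatrix
  split_ifs <;> positivity

theorem somborMatrix_pos_iff {i j : V} : 0 < somborMatrix G i j ↔ G.Adj i j := by
  refine ⟨fun h => by_contra fun hij => by simp [somborMatrix, hij] at h, fun hij => ?_⟩
  have : 0 < G.degree i := G.degree_pos_iff_exists_adj i |>.mpr ⟨j, hij⟩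
  simp only [somborMatrix, if_pos hij]
  positivity

theorem somborMatrix_sq (i j : V) :
    somborMatrix G i j ^ 2 =
      if G.Adj i j then (G.degree i : ℝ) ^ 2 + (G.degree j : ℝ) ^ 2 else 0 := by
  unfold somborMatrix
  split_ifs <;> simp [Real.sq_sqrt, add_nonneg, sq_nonneg]

theorem trace_somborMatrix : (somborMatrix G).trace = 0 :=
  sum_eq_zero fun _ _ => if_neg G.irrefl

theorem sum_sum_somborMatrix_sq : ∑ i, ∑ j, somborMatrix G i j ^ 2 = 2 * forgottenIndex G := by
  have hrow (i : V) :
      ∑ j, (if G.Adj i j then (G.degree i : ℝ) ^ 2 else 0) = G.degree i ^ 3 := by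
    rw [← sum_filter, ← G.neighborFinset_eq_filter, sum_const,
      G.card_neighborFinset_eq_degree, nsmul_eq_mul]
    ring
  have hcol :
      ∑ i, ∑ j, (if G.Adj i j then (G.degree j : ℝ) ^ 2 else 0) = forgottenIndex G := by
    rw [sum_comm]
    simp_rw [G.adj_comm _ _]
    exact sum_congr rfl fun i _ => hrow i
  simp_rw [somborMatrix_sq, ite_add_zero, sum_add_distrib, hcol, hrow]
  rw [forgottenIndex]
  ring

theorem somborMatrix_mul_self_apply_nonneg (i k : V) :
    0 ≤ (somborMatrix G * somborMatrix G) i k :=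
  sum_nonneg fun j _ => mul_nonneg (somborMatrix_nonneg G i j) (somborMatrix_nonneg G j k)

theorem somborMatrix_mul_self_apply_pos_iff {i k : V} :
    0 < (somborMatrix G * somborMatrix G) i k ↔ ∃ j, G.Adj i j ∧ G.Adj j k := by
  rw [mul_apply, sum_pos_iff_of_nonneg fun j _ =>
    mul_nonneg (somborMatrix_nonneg G i j) (somborMatrix_nonneg G j k)]
  simp only [mem_univ, true_and]
  refine exists_congr fun j => ?_
  rw [← somborMatrix_pos_iff, ← somborMatrix_pos_iff]
  exact ⟨fun h => ⟨pos_of_mul_pos_left h (somborMatrix_nonneg G j k),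
    pos_of_mul_pos_right h (somborMatrix_nonneg G i j)⟩, fun h => mul_pos h.1 h.2⟩

theorem somborMatrix_mul_self_apply_self (v : V) :
    (somborMatrix G * somborMatrix G) v v =
      ∑ j ∈ G.neighborFinset v, ((G.degree v : ℝ) ^ 2 + (G.degree j : ℝ) ^ 2) := by
  rw [mul_apply, G.neighborFinset_eq_filter, sum_filter]
  refine sum_congr rfl fun j _ => ?_
  rw [← somborMatrix_sq, sq, ← (somborMatrix_isHermitian G).apply j v, star_trivial]

theorem eq_bot_or_forall_degree_eq_one_of_somborMatrix_mul_self_eq {c : ℝ}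
    (hc : somborMatrix G * somborMatrix G = c • 1) : G = ⊥ ∨ ∀ v, G.degree v = 1 := by
  have hdiag (v : V) : 0 < c ↔ ∃ j, G.Adj v j := by
    simpa [hc, G.adj_comm _ v] using somborMatrix_mul_self_apply_pos_iff G (i := v) (k := v)
  have hoff {a b : V} (hab : a ≠ b) : ¬ ∃ j, G.Adj a j ∧ G.Adj j b := by
    simpa [hc, hab] using somborMatrix_mul_self_apply_pos_iff G (i := a) (k := b)
  by_cases hc0 : 0 < c
  · refine Or.inr fun v => ?_
    obtain ⟨j, hj⟩ := (hdiag v).1 hc0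
    rw [← G.card_neighborFinset_eq_degree, card_eq_one]
    refine ⟨j, eq_singleton_iff_unique_mem.2 ⟨G.mem_neighborFinset v j |>.2 hj, ?_⟩⟩
    intro x hx
    by_contra hxj
    exact hoff hxj ⟨v, (G.mem_neighborFinset v x |>.1 hx).symm, hj⟩
  · left
    ext a b
    exact iff_of_false (fun hab => hc0 ((hdiag a).2 ⟨b, hab⟩)) id

theorem somborMatrix_mul_self_apply_eq_zero_of_degree_le_one (h : ∀ v, G.degree v ≤ 1)
    {a b : V} (hab : a ≠ b) : (somborMatrix G * somborMatrix G) a b = 0 := by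
  refine le_antisymm (not_lt.1 fun hpos => ?_) (somborMatrix_mul_self_apply_nonneg G a b)
  obtain ⟨j, hja, hjb⟩ := (somborMatrix_mul_self_apply_pos_iff G).1 hpos
  have hj := h j
  rw [← G.card_neighborFinset_eq_degree] at hj
  exact hab (card_le_one.1 hj a (by simpa using hja.symm) b (by simpa using hjb))

theorem exists_somborMatrix_mul_self_eq_smul_one_iff :
    (∃ c : ℝ, somborMatrix G * somborMatrix G = c • 1) ↔ G = ⊥ ∨ ∀ v, G.degree v = 1 := by
  refine ⟨fun ⟨c, hc⟩ => eq_bot_or_forall_degree_eq_one_of_somborMatrix_mul_self_eq G hc,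
    fun h => ?_⟩
  have hdiag : ∃ c : ℝ, ∀ v, (somborMatrix G * somborMatrix G) v v = c := by
    rcases h with rfl | h
    · exact ⟨0, fun v => by simp [somborMatrix_mul_self_apply_self]⟩
    · refine ⟨2, fun v => ?_⟩
      rw [somborMatrix_mul_self_apply_self, sum_congr rfl fun j _ => by rw [h v, h j],
        sum_const, G.card_neighborFinset_eq_degree, h v]
      norm_num
  have hdeg (v : V) : G.degree v ≤ 1 := by
    rcases h with rfl | h
    · simp
    · exact (h v).le
  obtain ⟨c, hc⟩ := hdiag
  refine ⟨c, ?_⟩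
  ext a b
  by_cases hab : a = b
  · subst hab
    simp [hc]
  · simp [somborMatrix_mul_self_apply_eq_zero_of_degree_le_one G hdeg hab, hab]

theorem adj_of_somborMatrix_mul_self_eq {α β : ℝ}
    (h : somborMatrix G * somborMatrix G = α • somborMatrix G + β • 1) {a b c : V}
    (hab : G.Adj a b) (hbc : G.Adj b c) (hac : a ≠ c) : G.Adj a c := by
  by_contra hnac
  have hpos := (somborMatrix_mul_self_apply_pos_iff G).2 ⟨b, hab, hbc⟩
  rw [h] at hpos
  simp [somborMatrix, hnac, hac] at hpos

end SomborMatrix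

section SomborSpectrum

variable {V : Type*} [Fintype V] (G : SimpleGraph V)

theorem somborEigs_le_somborSpecRad (i : V) : somborEigs G i ≤ somborSpecRad G :=
  le_ciSup (Set.finite_range _).bddAbove i

theorem exists_somborEigs_eq_somborSpecRad [Nonempty V] :
    ∃ i, somborEigs G i = somborSpecRad G :=
  exists_eq_ciSup_of_finite

theorem sum_somborEigs : ∑ i, somborEigs G i = 0 := by
  have := (somborMatrix_isHermitian G).trace_eq_sum_eigenvalues
  rw [trace_somborMatrix] at this
  exact_mod_cast this.symm

theorem sum_somborEigs_sq : ∑ i, somborEigs G i ^ 2 = 2 * forgottenIndex G := by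
  rw [somborEigs, (somborMatrix_isHermitian G).sum_eigenvalues_sq, sum_sum_somborMatrix_sq]

theorem abs_somborEigs_le (i : V) : |somborEigs G i| ≤ somborSpecRad G :=
  (somborMatrix_isHermitian G).abs_eigenvalues_le_of_nonneg (somborMatrix_nonneg G)
    (somborEigs_le_somborSpecRad G) i

theorem somborSpecRad_nonneg [Nonempty V] : 0 ≤ somborSpecRad G :=
  (abs_nonneg _).trans (abs_somborEigs_le G (Classical.arbitrary V))

theorem somborEigs_sq_le (i : V) : somborEigs G i ^ 2 ≤ somborSpecRad G ^ 2 := by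
  simpa using pow_le_pow_left₀ (abs_nonneg _) (abs_somborEigs_le G i) 2

theorem sum_erase_somborEigs {i₀ : V} (hi₀ : somborEigs G i₀ = somborSpecRad G) :
    ∑ i ∈ univ.erase i₀, somborEigs G i = -somborSpecRad G := by
  have := add_sum_erase _ (somborEigs G) (mem_univ i₀)
  rw [sum_somborEigs, hi₀] at this
  linarith

theorem sum_erase_somborEigs_sq {i₀ : V} (hi₀ : somborEigs G i₀ = somborSpecRad G) :
    ∑ i ∈ univ.erase i₀, somborEigs G i ^ 2 =
      2 * forgottenIndex G - somborSpecRad G ^ 2 := by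
  have := add_sum_erase _ (somborEigs G · ^ 2) (mem_univ i₀)
  rw [sum_somborEigs_sq, hi₀] at this
  linarith

theorem two_mul_forgottenIndex_le :
    2 * forgottenIndex G ≤ Fintype.card V * somborSpecRad G ^ 2 := by
  rw [← sum_somborEigs_sq, ← nsmul_eq_mul, ← card_univ, ← sum_const]
  exact sum_le_sum fun i _ => somborEigs_sq_le G i

theorem card_mul_somborSpecRad_sq_le [Nonempty V] :
    Fintype.card V * somborSpecRad G ^ 2 ≤ 2 * (Fintype.card V - 1) * forgottenIndex G := by
  obtain ⟨i₀, hi₀⟩ := exists_somborEigs_eq_somborSpecRad G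
  have h := sq_sum_le_card_mul_sum_sq (s := univ.erase i₀) (f := somborEigs G)
  rw [sum_erase_somborEigs G hi₀, sum_erase_somborEigs_sq G hi₀, card_erase_of_mem (mem_univ i₀),
    card_univ, Nat.cast_sub Fintype.card_pos, Nat.cast_one, neg_sq] at h
  linarith

theorem card_mul_somborSpecRad_sq_eq_iff [Nonempty V] :
    Fintype.card V * somborSpecRad G ^ 2 = 2 * forgottenIndex G ↔
      ∃ c : ℝ, somborMatrix G * somborMatrix G = c • 1 := by
  rw [exists_congr fun c => (somborMatrix_isHermitian G).mul_self_eq_smul_one_iff c]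
  change _ ↔ ∃ c : ℝ, ∀ i, somborEigs G i ^ 2 = c
  constructor
  · intro h
    have hsum : ∑ i, (somborSpecRad G ^ 2 - somborEigs G i ^ 2) = 0 := by
      rw [sum_sub_distrib, sum_somborEigs_sq, sum_const, card_univ, nsmul_eq_mul, h, sub_self]
    refine ⟨somborSpecRad G ^ 2, fun i => (sub_eq_zero.1 ?_).symm⟩
    exact (sum_eq_zero_iff_of_nonneg fun j _ => sub_nonneg.2 (somborEigs_sq_le G j)).1
      hsum i (mem_univ i)
  · rintro ⟨c, hc⟩
    obtain ⟨i₀, hi₀⟩ := exists_somborEigs_eq_somborSpecRad G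
    rw [← sum_somborEigs_sq, sum_congr rfl fun i _ => hc i, ← hi₀, hc, sum_const, card_univ,
      nsmul_eq_mul]

theorem exists_somborMatrix_mul_self_eq_of_card_mul_somborSpecRad_sq_eq
    (hV : 1 < Fintype.card V)
    (h : Fintype.card V * somborSpecRad G ^ 2 = 2 * (Fintype.card V - 1) * forgottenIndex G) :
    ∃ α β : ℝ, somborMatrix G * somborMatrix G = α • somborMatrix G + β • 1 := by
  have : Nonempty V := Fintype.card_pos_iff.1 (by omega)
  obtain ⟨i₀, hi₀⟩ := exists_somborEigs_eq_somborSpecRad G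
  set ρ := somborSpecRad G
  set m : ℝ := Fintype.card V - 1
  have hm : 0 < m := by
    have : (1 : ℝ) < Fintype.card V := by exact_mod_cast hV
    linarith
  have hcard : (#(univ.erase i₀) : ℝ) = m := by
    rw [card_erase_of_mem (mem_univ i₀), card_univ, Nat.cast_sub hV.le, Nat.cast_one]
  have hsum : ∑ i ∈ univ.erase i₀, (m * somborEigs G i + ρ) ^ 2 = 0 := by
    have hvar := sum_sq_card_mul_sub_sum (univ.erase i₀) (somborEigs G)
    rw [hcard, sum_erase_somborEigs G hi₀, sum_erase_somborEigs_sq G hi₀] at hvar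
    simp only [sub_neg_eq_add] at hvar
    rw [hvar]
    linear_combination (-m) * h
  have hμ (i : V) (hi : i ≠ i₀) : somborEigs G i = -ρ / m := by
    have := (sum_eq_zero_iff_of_nonneg fun j _ => sq_nonneg _).1 hsum i
      (mem_erase.2 ⟨hi, mem_univ i⟩)
    field_simp
    linarith [pow_eq_zero_iff two_ne_zero |>.1 this]
  refine ⟨ρ + -ρ / m, -(ρ * (-ρ / m)), ?_⟩
  refine ((somborMatrix_isHermitian G).mul_self_eq_smul_add_smul_one_iff _ _).2 fun i => ?_
  change somborEigs G i ^ 2 = _ * somborEigs G i + _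
  by_cases hi : i = i₀
  · rw [hi, hi₀]
    ring
  · rw [hμ i hi]
    ring

end SomborSpectrum

section Regular

variable {V : Type*} [Fintype V] {G : SimpleGraph V} {d : ℕ}

theorem SimpleGraph.IsRegularOfDegree.somborMatrix_mulVec_one (h : G.IsRegularOfDegree d) :
    somborMatrix G *ᵥ (fun _ => 1) = fun _ => √2 * d ^ 2 := by
  ext i
  simp only [mulVec, dotProduct, mul_one, somborMatrix, h.degree_eq]
  rw [← sum_filter, ← G.neighborFinset_eq_filter, sum_const, G.card_neighborFinset_eq_degree,
    h.degree_eq, nsmul_eq_mul, ← two_mul, Real.sqrt_mul' _ (by positivity),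
    Real.sqrt_sq (Nat.cast_nonneg d)]
  ring

theorem SimpleGraph.IsRegularOfDegree.forgottenIndex_eq (h : G.IsRegularOfDegree d) :
    forgottenIndex G = Fintype.card V * d ^ 3 := by
  simp [forgottenIndex, h.degree_eq]

theorem SimpleGraph.IsRegularOfDegree.sqrt_two_mul_sq_le_somborSpecRad [Nonempty V]
    (h : G.IsRegularOfDegree d) : √2 * d ^ 2 ≤ somborSpecRad G := by
  have := (somborMatrix_isHermitian G).dotProduct_mulVec_le (somborEigs_le_somborSpecRad G)
    (fun _ => 1)
  rw [h.somborMatrix_mulVec_one] at this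
  simp only [dotProduct, one_mul, mul_one, sum_const, card_univ, nsmul_eq_mul] at this
  exact le_of_mul_le_mul_left (by linarith) (Nat.cast_pos.2 Fintype.card_pos)

theorem SimpleGraph.IsRegularOfDegree.card_mul_somborSpecRad_sq_eq [Nonempty V]
    (h : G.IsRegularOfDegree (Fintype.card V - 1)) :
    Fintype.card V * somborSpecRad G ^ 2 = 2 * (Fintype.card V - 1) * forgottenIndex G := by
  have hd : ((Fintype.card V - 1 : ℕ) : ℝ) = Fintype.card V - 1 := by
    rw [Nat.cast_sub Fintype.card_pos, Nat.cast_one]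
  have hρ := h.sqrt_two_mul_sq_le_somborSpecRad
  rw [hd] at hρ
  refine (card_mul_somborSpecRad_sq_le G).antisymm ?_
  rw [h.forgottenIndex_eq, hd]
  have hsq : (√2 * ((Fintype.card V : ℝ) - 1) ^ 2) ^ 2 ≤ somborSpecRad G ^ 2 :=
    pow_le_pow_left₀ (by positivity) hρ 2
  rw [mul_pow, Real.sq_sqrt zero_le_two] at hsq
  calc 2 * ((Fintype.card V : ℝ) - 1) * (Fintype.card V * ((Fintype.card V : ℝ) - 1) ^ 3)
      = Fintype.card V * (2 * (((Fintype.card V : ℝ) - 1) ^ 2) ^ 2) := by ring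
    _ ≤ _ := by gcongr

end Regular

theorem SimpleGraph.Connected.card_mul_somborSpecRad_sq_eq_iff {V : Type*} [Fintype V]
    {G : SimpleGraph V} (hG : G.Connected) :
    Fintype.card V * somborSpecRad G ^ 2 = 2 * (Fintype.card V - 1) * forgottenIndex G ↔
      G = ⊤ := by
  have := hG.nonempty
  refine ⟨fun h => ?_, ?_⟩
  · rcases Nat.lt_or_ge 1 (Fintype.card V) with hV | hV
    · obtain ⟨α, β, hαβ⟩ := exists_somborMatrix_mul_self_eq_of_card_mul_somborSpecRad_sq_eq G hV h
      exact hG.preconnected.eq_top_of_adj_trans (adj_of_somborMatrix_mul_self_eq G hαβ)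
    · have : Subsingleton V := Fintype.card_le_one_iff_subsingleton.1 hV
      ext a b
      simp [Subsingleton.elim a b]
  · rintro rfl
    exact SimpleGraph.IsRegularOfDegree.card_mul_somborSpecRad_sq_eq fun v => by
      convert SimpleGraph.complete_graph_degree v

theorem stmt6 {n : ℕ} (hn : 1 ≤ n) (G : SimpleGraph (Fin n)) :
    (Real.sqrt (2 * forgottenIndex G / n) ≤ somborSpecRad G ∧
      somborSpecRad G ≤ Real.sqrt (2 * ((n : ℝ) - 1) * forgottenIndex G / n)) ∧
    (Real.sqrt (2 * forgottenIndex G / n) = somborSpecRad G ↔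
      G = ⊥ ∨ ∀ v, G.degree v = 1) ∧
    (G.Connected →
      (somborSpecRad G = Real.sqrt (2 * ((n : ℝ) - 1) * forgottenIndex G / n) ↔ G = ⊤)) := by
  have : Nonempty (Fin n) := Fin.pos_iff_nonempty.1 hn
  have hρ := somborSpecRad_nonneg G
  have hF := forgottenIndex_nonneg G
  have hn₀ : (0 : ℝ) < n := by exact_mod_cast hn
  have hn₁ : (0 : ℝ) ≤ n - 1 := by
    have : (1 : ℝ) ≤ n := by exact_mod_cast hn
    linarith
  have hlower := two_mul_forgottenIndex_le G
  have hupper := card_mul_somborSpecRad_sq_le G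
  have hlower_eq := card_mul_somborSpecRad_sq_eq_iff G
  rw [Fintype.card_fin] at hlower hupper hlower_eq
  refine ⟨⟨?_, ?_⟩, ?_, fun hG => ?_⟩
  · rw [Real.sqrt_le_left hρ, div_le_iff₀ hn₀]
    linarith
  · rw [Real.le_sqrt hρ (by positivity), le_div_iff₀ hn₀]
    linarith
  · rw [Real.sqrt_eq_iff_eq_sq (by positivity) hρ, div_eq_iff hn₀.ne', eq_comm, mul_comm,
      hlower_eq, exists_somborMatrix_mul_self_eq_smul_one_iff]
  · rw [eq_comm, Real.sqrt_eq_iff_eq_sq (by positivity) hρ, div_eq_iff hn₀.ne', eq_comm,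
      mul_comm, ← hG.card_mul_somborSpecRad_sq_eq_iff, Fintype.card_fin]
end

section
/- Among all complete bipartite graphs on n vertices, the Sombor energy satisfies 2√((n−1)(n²−2n+2)) ≤ E(K_{s,t}) ≤ 2√(⌈n/2⌉³⌊n/2⌋ + ⌊n/2⌋³⌈n/2⌉), with equality on the left if and only if {s,t} = {1, n−1} and equality on the right if and only if {s,t} = {⌈n/2⌉, ⌊n/2⌋}. -/
open scoped Classical

/-!
The Sombor matrix `S` of `K_{s,t}` is `√(s² + t²)` times its adjacency matrix `A`, and
`A³ = st • A`. Hence every Sombor eigenvalue `λ` is a root of `X³ - K X` with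
`K = st(s² + t²)`, so that `|λ| √K = λ²`; summing, `E · √K = tr S² = 2K`, i.e. `E = 2√K`.
With `p = st` and `s + t = n` we have `K = p (n² - 2p)`, which is strictly increasing for
`p ≤ n²/4`, while `n - 1 ≤ p ≤ ⌊n/2⌋⌈n/2⌉`, with equality exactly at `{1, n - 1}`,
resp. `{⌊n/2⌋, ⌈n/2⌉}`.
-/

open Matrix Polynomial

lemma abs_mul_sqrt_eq_sq_of_pow_three_eq {x K : ℝ} (h : x ^ 3 = K * x) :
    |x| * √K = x ^ 2 := by
  have : x * (x ^ 2 - K) = 0 := by linear_combination h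
  rcases mul_eq_zero.mp this with hx | hx
  · simp [hx]
  · rw [← sub_eq_zero.mp hx, Real.sqrt_sq_eq_abs, abs_mul_abs_self, sq]

namespace Matrix.IsHermitian

variable {𝕜 n : Type*} [RCLike 𝕜] [Fintype n] [DecidableEq n] {A : Matrix n n 𝕜}

lemma eval_eigenvalues_eq_zero (hA : A.IsHermitian) {p : ℝ[X]} (hp : aeval A p = 0)
    (i : n) :
    p.eval (hA.eigenvalues i) = 0 := by
  have hmem := spectrum.subset_polynomial_aeval A p ⟨_, hA.eigenvalues_mem_spectrum_real i, rfl⟩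
  have : Nonempty n := ⟨i⟩
  simpa [hp, spectrum.zero_eq] using hmem

lemma trace_mul_self (hA : A.IsHermitian) :
    (A * A).trace = ∑ i, (hA.eigenvalues i : 𝕜) ^ 2 := by
  conv_lhs => rw [hA.spectral_theorem, ← map_mul, Unitary.conjStarAlgAut_apply, trace_mul_cycle,
    Unitary.coe_star_mul_self, one_mul, diagonal_mul_diagonal, trace_diagonal]
  simp [sq]

lemma sum_abs_eigenvalues_mul_sqrt (hA : A.IsHermitian) {K : ℝ} (h3 : A * A * A = K • A) :
    (((∑ i, |hA.eigenvalues i|) * √K : ℝ) : 𝕜) = (A * A).trace := by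
  have hroot (i : n) : hA.eigenvalues i ^ 3 = K * hA.eigenvalues i := by
    have := hA.eval_eigenvalues_eq_zero (p := X ^ 3 - C K * X)
      (by simp [h3, pow_succ, Algebra.smul_def]) i
    simpa [sub_eq_zero] using this
  rw [hA.trace_mul_self, Finset.sum_mul]
  exact_mod_cast Finset.sum_congr rfl fun i _ => abs_mul_sqrt_eq_sq_of_pow_three_eq (hroot i)

end Matrix.IsHermitian

namespace SimpleGraph

variable {V W : Type*} [Fintype V] [Fintype W]

lemma completeBipartiteGraph_degree_inl (v : V) :
    (completeBipartiteGraph V W).degree (.inl v) = Fintype.card W := by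
  rw [← card_neighborFinset_eq_degree,
    show (completeBipartiteGraph V W).neighborFinset (.inl v) = Finset.univ.map .inr by
      ext (_ | _) <;> simp]
  simp

lemma completeBipartiteGraph_degree_inr (w : W) :
    (completeBipartiteGraph V W).degree (.inr w) = Fintype.card V := by
  rw [← card_neighborFinset_eq_degree,
    show (completeBipartiteGraph V W).neighborFinset (.inr w) = Finset.univ.map .inl by
      ext (_ | _) <;> simp]
  simp

variable (R : Type*) [Semiring R]

lemma adjMatrix_completeBipartiteGraph_mul_self_mul_self :
    (completeBipartiteGraph V W).adjMatrix R * (completeBipartiteGraph V W).adjMatrix R *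
      (completeBipartiteGraph V W).adjMatrix R =
      (Fintype.card V * Fintype.card W) • (completeBipartiteGraph V W).adjMatrix R := by
  ext (_ | _) (_ | _) <;> simp [Matrix.mul_apply, Fintype.sum_sum_type, adjMatrix_apply]
  exact Nat.cast_comm _ _

lemma trace_adjMatrix_completeBipartiteGraph_mul_self :
    ((completeBipartiteGraph V W).adjMatrix R * (completeBipartiteGraph V W).adjMatrix R).trace =
      2 * Fintype.card V * Fintype.card W := by
  simp only [Matrix.trace, Matrix.diag, adjMatrix_mul_self_apply_self, Fintype.sum_sum_type,
    completeBipartiteGraph_degree_inl, completeBipartiteGraph_degree_inr]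
  simp [Nat.cast_comm (Fintype.card W), two_mul, add_mul]

end SimpleGraph

section CompleteBipartite

variable {V W : Type*} [Fintype V] [Fintype W]

open SimpleGraph in
lemma somborMatrix_completeBipartiteGraph :
    somborMatrix (completeBipartiteGraph V W) =
      √((Fintype.card V : ℝ) ^ 2 + (Fintype.card W : ℝ) ^ 2) •
        (completeBipartiteGraph V W).adjMatrix ℝ := by
  ext (_ | _) (_ | _) <;>
    simp [somborMatrix, completeBipartiteGraph_degree_inl, completeBipartiteGraph_degree_inr,
      add_comm]

lemma somborEnergy_completeBipartiteGraph [Nonempty V] [Nonempty W] :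
    somborEnergy (completeBipartiteGraph V W) =
      2 * √((Fintype.card V : ℝ) * Fintype.card W *
        ((Fintype.card V : ℝ) ^ 2 + (Fintype.card W : ℝ) ^ 2)) := by
  have hS := somborMatrix_completeBipartiteGraph (V := V) (W := W)
  set S := somborMatrix (completeBipartiteGraph V W)
  set a : ℝ := (Fintype.card V : ℝ)
  set b : ℝ := (Fintype.card W : ℝ)
  set c := √(a ^ 2 + b ^ 2)
  set K := a * b * (a ^ 2 + b ^ 2)
  have hc : c ^ 2 = a ^ 2 + b ^ 2 := Real.sq_sqrt (by positivity)
  have hK : 0 < K := by positivity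
  have h3 : S * S * S = K • S := by
    simp only [hS, Matrix.smul_mul, Matrix.mul_smul, smul_smul,
      SimpleGraph.adjMatrix_completeBipartiteGraph_mul_self_mul_self,
      ← Nat.cast_smul_eq_nsmul ℝ]
    congr 1
    push_cast
    linear_combination (a * b * c) * hc
  have h2 : (S * S).trace = 2 * K := by
    rw [hS, Matrix.smul_mul, Matrix.mul_smul, Matrix.trace_smul, Matrix.trace_smul,
      SimpleGraph.trace_adjMatrix_completeBipartiteGraph_mul_self, smul_eq_mul, smul_eq_mul]
    linear_combination (2 * a * b) * hc
  have hE := (somborMatrix_isHermitian _).sum_abs_eigenvalues_mul_sqrt h3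
  rw [h2, RCLike.ofReal_real_eq_id, id] at hE
  refine mul_right_cancel₀ (Real.sqrt_pos.mpr hK).ne' ?_
  rw [mul_assoc, Real.mul_self_sqrt hK.le]
  exact hE

lemma somborEnergy_completeBipartiteGraph_fin {s t n : ℕ} (hs : 1 ≤ s) (ht : 1 ≤ t)
    (hn : s + t = n) :
    somborEnergy (completeBipartiteGraph (Fin s) (Fin t)) =
      2 * √((s * t : ℝ) * ((n : ℝ) ^ 2 - 2 * (s * t))) := by
  have : Nonempty (Fin s) := ⟨⟨0, hs⟩⟩
  have : Nonempty (Fin t) := ⟨⟨0, ht⟩⟩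
  rw [somborEnergy_completeBipartiteGraph, Fintype.card_fin, Fintype.card_fin, ← hn]
  push_cast
  ring_nf

end CompleteBipartite

lemma strictMonoOn_two_mul_sqrt_mul_sub (N : ℝ) :
    StrictMonoOn (fun p : ℝ => 2 * √(p * (N ^ 2 - 2 * p))) (Set.Icc 0 (N ^ 2 / 4)) := by
  rintro p ⟨hp0, hp⟩ q ⟨-, hq⟩ hpq
  have : p * (N ^ 2 - 2 * p) < q * (N ^ 2 - 2 * q) := by nlinarith
  have : 0 ≤ p * (N ^ 2 - 2 * p) := by nlinarith
  dsimp only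
  gcongr

lemma mul_mem_Icc_sq_div_four {x y : ℝ} (hx : 0 ≤ x) (hy : 0 ≤ y) :
    x * y ∈ Set.Icc 0 ((x + y) ^ 2 / 4) :=
  ⟨by positivity, by nlinarith [sq_nonneg (x - y)]⟩

namespace Nat

lemma add_le_mul_add_one {s t : ℕ} (hs : 1 ≤ s) (ht : 1 ≤ t) : s + t ≤ s * t + 1 := by
  nlinarith

lemma add_eq_mul_add_one_iff {s t : ℕ} : s + t = s * t + 1 ↔ s = 1 ∨ t = 1 := by
  constructor
  · intro h
    have h' := congrArg (Nat.cast : ℕ → ℤ) h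
    push_cast at h'
    have : ((s : ℤ) - 1) * ((t : ℤ) - 1) = 0 := by linear_combination -h'
    rcases _root_.mul_eq_zero.mp this with h | h
    · left; omega
    · right; omega
  · rintro (rfl | rfl) <;> ring

lemma mul_le_mul_of_add_eq {a b s t : ℕ} (hab : a ≤ b) (hba : b ≤ a + 1) (h : s + t = a + b) :
    s * t ≤ a * b := by
  obtain hs | hs : s ≤ a ∨ b ≤ s := by omega
  · nlinarith
  · nlinarith

lemma mul_eq_mul_of_add_eq_iff {a b s t : ℕ} (hab : a ≤ b) (hba : b ≤ a + 1)
    (h : s + t = a + b) :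
    s * t = a * b ↔ s = a ∨ s = b := by
  constructor
  · intro he
    by_contra! hne
    obtain hs | hs : s < a ∨ b < s := by omega
    · nlinarith
    · nlinarith
  · rintro (rfl | rfl)
    · rw [show t = b by omega]
    · rw [show t = a by omega, mul_comm]

end Nat

theorem stmt13 (n s t : ℕ) (hs : 1 ≤ s) (ht : 1 ≤ t) (hn : s + t = n) :
    (2 * Real.sqrt (((n : ℝ) - 1) * ((n : ℝ) ^ 2 - 2 * n + 2)) ≤
        somborEnergy (completeBipartiteGraph (Fin s) (Fin t)) ∧
      somborEnergy (completeBipartiteGraph (Fin s) (Fin t)) ≤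
        2 * Real.sqrt ((((n + 1) / 2 : ℕ) : ℝ) ^ 3 * ((n / 2 : ℕ) : ℝ) +
          (((n / 2 : ℕ) : ℝ)) ^ 3 * (((n + 1) / 2 : ℕ) : ℝ)) ∧
    (2 * Real.sqrt (((n : ℝ) - 1) * ((n : ℝ) ^ 2 - 2 * n + 2)) =
        somborEnergy (completeBipartiteGraph (Fin s) (Fin t)) ↔
      (s = 1 ∧ t = n - 1) ∨ (s = n - 1 ∧ t = 1)) ∧
    (somborEnergy (completeBipartiteGraph (Fin s) (Fin t)) =
        2 * Real.sqrt ((((n + 1) / 2 : ℕ) : ℝ) ^ 3 * ((n / 2 : ℕ) : ℝ) +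
          (((n / 2 : ℕ) : ℝ)) ^ 3 * (((n + 1) / 2 : ℕ) : ℝ)) ↔
      (s = (n + 1) / 2 ∧ t = n / 2) ∨ (s = n / 2 ∧ t = (n + 1) / 2))) := by
  set a := n / 2 with ha
  set b := (n + 1) / 2 with hb
  set f := fun p : ℝ => 2 * √(p * ((n : ℝ) ^ 2 - 2 * p))
  have hf := strictMonoOn_two_mul_sqrt_mul_sub (n : ℝ)
  have hnR : (s : ℝ) + t = n := by exact_mod_cast hn
  have habR : (a : ℝ) + b = n := by exact_mod_cast (by omega : a + b = n)
  have hlow : 2 * √(((n : ℝ) - 1) * ((n : ℝ) ^ 2 - 2 * n + 2)) = f (n - 1) := by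
    simp only [f]
    ring_nf
  have hup : 2 * √((b : ℝ) ^ 3 * a + (a : ℝ) ^ 3 * b) = f (a * b) := by
    simp only [f, ← habR]
    ring_nf
  have hmem₁ : (n : ℝ) - 1 ∈ Set.Icc 0 ((n : ℝ) ^ 2 / 4) := by
    have hn1 : (1 : ℝ) ≤ n := by exact_mod_cast (by omega : 1 ≤ n)
    simpa using mul_mem_Icc_sq_div_four zero_le_one (sub_nonneg.2 hn1)
  have hmem₂ : (s : ℝ) * t ∈ Set.Icc 0 ((n : ℝ) ^ 2 / 4) :=
    hnR ▸ mul_mem_Icc_sq_div_four (by positivity) (by positivity)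
  have hmem₃ : (a : ℝ) * b ∈ Set.Icc 0 ((n : ℝ) ^ 2 / 4) :=
    habR ▸ mul_mem_Icc_sq_div_four (by positivity) (by positivity)
  rw [somborEnergy_completeBipartiteGraph_fin hs ht hn, hlow, hup, hf.le_iff_le hmem₁ hmem₂,
    hf.le_iff_le hmem₂ hmem₃, hf.injOn.eq_iff hmem₁ hmem₂, hf.injOn.eq_iff hmem₂ hmem₃,
    sub_le_iff_le_add, sub_eq_iff_eq_add]
  norm_cast
  refine ⟨hn ▸ Nat.add_le_mul_add_one hs ht,
    Nat.mul_le_mul_of_add_eq (by omega) (by omega) (by omega), ?_, ?_⟩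
  · rw [← hn, Nat.add_eq_mul_add_one_iff]
    omega
  · rw [Nat.mul_eq_mul_of_add_eq_iff (by omega) (by omega) (by omega)]
    omega
end
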